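/- For ν > 0, d > 0, n ∈ ℕ, and t > 0, the function M(t) = (d^ν t^ν)^n E_{ν, νn+1}(-d^ν t^ν) satisfies M(t) + d^ν (₀D_t^{-ν} M)(t) = (d^ν t^ν)^n / Γ(νn + 1). -/

import Mathlib

open MeasureTheory intervalIntegral

/-- Riemann–Liouville fractional integral of order ν. -/
noncomputable def rlInt (ν : ℝ) (f : ℝ → ℝ) (t : ℝ) : ℝ :=
  (1 / Real.Gamma ν) * ∫ s in (0 : ℝ)..t, (t - s) ^ (ν - 1) * f s

/-- Two-parameter Mittag-Leffler function `E_{α,β}(x) = Σ_{r} x^r / Γ(αr + β)`. -/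
noncomputable def mittagLeffler (α β x : ℝ) : ℝ :=
  ∑' r : ℕ, x ^ r / Real.Gamma (α * r + β)

/-!
With `a = d ^ ν`, expanding the Mittag-Leffler function writes `M` as the alternating series
`∑ r, (-1) ^ r (a t ^ ν) ^ (n + r) / Γ(ν (n + r) + 1)`. The Beta integral shows that `a ₀D_t^{-ν}`
sends each term `(a s ^ ν) ^ k / Γ(ν k + 1)` to the next one, so `a ₀D_t^{-ν} M` is minus the series
shifted by one index and `M + a ₀D_t^{-ν} M` telescopes to the first term. The fractional integral may
be taken termwise because the series converges absolutely: for `x ≥ 1`, `Γ(x) ≥ z ^ (x - 1) e^{-z}`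
bounds the terms by a geometric series.
-/

open Real Set Filter

theorem Real.rpow_sub_one_mul_exp_neg_le_Gamma {x z : ℝ} (hx : 1 ≤ x) (hz : 0 ≤ z) :
    z ^ (x - 1) * exp (-z) ≤ Gamma x := by
  have hint := GammaIntegral_convergent (zero_lt_one.trans_le hx)
  calc z ^ (x - 1) * exp (-z) = ∫ u in Ioi z, exp (-u) * z ^ (x - 1) := by
        rw [MeasureTheory.integral_mul_const, integral_exp_neg_Ioi, mul_comm]
    _ ≤ ∫ u in Ioi z, exp (-u) * u ^ (x - 1) :=
        setIntegral_mono_on ((integrableOn_exp_neg_Ioi z).mul_const _)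
          (hint.mono_set (Ioi_subset_Ioi hz)) measurableSet_Ioi fun u hu =>
          mul_le_mul_of_nonneg_left (rpow_le_rpow hz (le_of_lt hu) (by linarith)) (exp_pos _).le
    _ ≤ ∫ u in Ioi 0, exp (-u) * u ^ (x - 1) :=
        setIntegral_mono_set hint
          ((ae_restrict_iff' measurableSet_Ioi).mpr (ae_of_all _ fun u hu =>
            mul_nonneg (exp_pos _).le (rpow_nonneg (le_of_lt hu) _)))
          (Ioi_subset_Ioi hz).eventuallyLE
    _ = Gamma x := (Gamma_eq_integral (zero_lt_one.trans_le hx)).symm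

theorem summable_pow_div_Gamma {ν : ℝ} (hν : 0 < ν) (c y : ℝ) :
    Summable fun k : ℕ => y ^ k / Gamma (ν * k + c) := by
  set q := 2 * |y| + 1
  have hq : 0 < q := by positivity
  -- `z ^ ν = q`, so that `Γ(ν k + c) ≥ z ^ (c - 1) e^{-z} q ^ k` beats `|y| ^ k`
  set z := q ^ ν⁻¹
  have hz : 0 < z := rpow_pos_of_pos hq _
  have hzν : z ^ ν = q := rpow_inv_rpow hq.le hν.ne'
  have hgeom : Summable fun k : ℕ => exp z / z ^ (c - 1) * (|y| / q) ^ k :=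
    (summable_geometric_of_lt_one (by positivity)
      ((div_lt_one hq).mpr (by linarith [abs_nonneg y]))).mul_left _
  refine hgeom.of_norm_bounded_eventually_nat ?_
  have hlarge : ∀ᶠ k : ℕ in atTop, 1 ≤ ν * k + c :=
    (tendsto_atTop_add_const_right _ c
      ((tendsto_natCast_atTop_atTop).const_mul_atTop hν)).eventually_ge_atTop 1
  filter_upwards [hlarge] with k hk
  have hlower := rpow_sub_one_mul_exp_neg_le_Gamma hk hz.le
  have hsplit : z ^ (ν * k + c - 1) = q ^ k * z ^ (c - 1) := by
    rw [show ν * k + c - 1 = ν * k + (c - 1) by ring, rpow_add hz, rpow_mul hz.le, hzν,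
      rpow_natCast]
  have hpos : 0 < z ^ (ν * k + c - 1) * exp (-z) := by positivity
  rw [norm_div, norm_pow, Real.norm_eq_abs, Real.norm_eq_abs, abs_of_pos (hpos.trans_le hlower)]
  calc |y| ^ k / Gamma (ν * k + c) ≤ |y| ^ k / (z ^ (ν * k + c - 1) * exp (-z)) :=
        div_le_div_of_nonneg_left (by positivity) hpos hlower
    _ = exp z / z ^ (c - 1) * (|y| / q) ^ k := by
        rw [hsplit, exp_neg, div_pow]
        field_simp

theorem integral_sub_rpow_mul_rpow {ν μ t : ℝ} (hν : 0 < ν) (hμ : -1 < μ) (ht : 0 < t) :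
    ∫ s in (0 : ℝ)..t, (t - s) ^ (ν - 1) * s ^ μ
      = Gamma ν * Gamma (μ + 1) / Gamma (μ + ν + 1) * t ^ (μ + ν) := by
  have hbeta : Complex.Gamma ((μ + 1 : ℝ) : ℂ) * Complex.Gamma (ν : ℂ)
      = Complex.Gamma ((μ + ν + 1 : ℝ) : ℂ) * Complex.betaIntegral ((μ + 1 : ℝ) : ℂ) ν := by
    rw [show ((μ + ν + 1 : ℝ) : ℂ) = ((μ + 1 : ℝ) : ℂ) + ν by push_cast; ring]
    exact Complex.Gamma_mul_Gamma_eq_betaIntegral (by simp; linarith) (by simpa using hν)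
  have hscaled := Complex.betaIntegral_scaled ((μ + 1 : ℝ) : ℂ) ν ht
  have hlhs : ∫ s in (0 : ℝ)..t, (s : ℂ) ^ (((μ + 1 : ℝ) : ℂ) - 1) * ((t : ℂ) - s) ^ ((ν : ℂ) - 1)
      = ((∫ s in (0 : ℝ)..t, (t - s) ^ (ν - 1) * s ^ μ : ℝ) : ℂ) := by
    rw [← intervalIntegral.integral_ofReal]
    refine intervalIntegral.integral_congr fun s hs => ?_
    rw [uIcc_of_le ht.le] at hs
    rw [Complex.ofReal_mul, Complex.ofReal_cpow (sub_nonneg.mpr hs.2),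
      Complex.ofReal_cpow hs.1]
    push_cast
    ring_nf
  rw [hlhs, show ((μ + 1 : ℝ) : ℂ) + ν - 1 = ((μ + ν : ℝ) : ℂ) by push_cast; ring,
    ← Complex.ofReal_cpow ht.le] at hscaled
  rw [Complex.Gamma_ofReal, Complex.Gamma_ofReal, Complex.Gamma_ofReal] at hbeta
  have hΓ : (Gamma (μ + ν + 1) : ℂ) ≠ 0 := by
    exact_mod_cast (Gamma_pos_of_pos (by linarith)).ne'
  apply Complex.ofReal_injective
  rw [hscaled]
  push_cast at hbeta ⊢
  field_simp
  linear_combination -((t ^ (μ + ν) : ℝ) : ℂ) * hbeta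

theorem rlInt_rpow {ν μ t : ℝ} (hν : 0 < ν) (hμ : -1 < μ) (ht : 0 < t) :
    rlInt ν (fun s => s ^ μ) t = Gamma (μ + 1) / Gamma (μ + ν + 1) * t ^ (μ + ν) := by
  rw [rlInt, integral_sub_rpow_mul_rpow hν hμ ht]
  field_simp [(Gamma_pos_of_pos hν).ne']

theorem rlInt_const_mul (ν c : ℝ) (f : ℝ → ℝ) (t : ℝ) :
    rlInt ν (fun s => c * f s) t = c * rlInt ν f t := by
  simp only [rlInt, mul_left_comm _ c, intervalIntegral.integral_const_mul]

theorem rlInt_congr {ν t : ℝ} {f g : ℝ → ℝ} (ht : 0 ≤ t) (hfg : EqOn f g (Icc 0 t)) :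
    rlInt ν f t = rlInt ν g t := by
  rw [rlInt, rlInt, intervalIntegral.integral_congr fun s hs => ?_]
  rw [uIcc_of_le ht] at hs
  simp only [hfg hs]

theorem intervalIntegrable_sub_rpow_mul {ν t : ℝ} (hν : 0 < ν) {f : ℝ → ℝ}
    (hf : ContinuousOn f (uIcc 0 t)) :
    IntervalIntegrable (fun s => (t - s) ^ (ν - 1) * f s) volume 0 t := by
  have hkernel := (intervalIntegrable_rpow' (a := 0) (b := t) (r := ν - 1)
    (by linarith)).comp_sub_left t
  simp only [sub_self, sub_zero] at hkernel
  exact hkernel.symm.mul_continuousOn hf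

theorem rlInt_tsum {ν t : ℝ} (hν : 0 < ν) (ht : 0 ≤ t) {g : ℕ → ℝ → ℝ}
    (hg : ∀ r, ContinuousOn (g r) (Icc 0 t))
    (hsum : Summable fun r => rlInt ν (fun s => |g r s|) t) :
    rlInt ν (fun s => ∑' r, g r s) t = ∑' r, rlInt ν (g r) t := by
  have hΓ : Gamma ν ≠ 0 := (Gamma_pos_of_pos hν).ne'
  set F : ℕ → ℝ → ℝ := fun r s => (t - s) ^ (ν - 1) * g r s
  have hF : ∀ r, IntegrableOn (F r) (Ioc 0 t) := fun r =>
    (intervalIntegrable_iff_integrableOn_Ioc_of_le ht).mp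
      (intervalIntegrable_sub_rpow_mul hν (by rw [uIcc_of_le ht]; exact hg r))
  have hnorm : ∀ r, ∫ s in Ioc 0 t, ‖F r s‖ = Gamma ν * rlInt ν (fun s => |g r s|) t := by
    intro r
    rw [rlInt, intervalIntegral.integral_of_le ht, ← mul_assoc, mul_one_div_cancel hΓ, one_mul]
    refine setIntegral_congr_fun measurableSet_Ioc fun s hs => ?_
    rw [Real.norm_eq_abs, abs_mul, abs_of_nonneg (rpow_nonneg (sub_nonneg.mpr hs.2) _)]
  have hinterchange := integral_tsum_of_summable_integral_norm hF
    ((hsum.mul_left (Gamma ν)).congr fun r => (hnorm r).symm)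
  simp only [F, tsum_mul_left] at hinterchange
  simp only [rlInt, intervalIntegral.integral_of_le ht, tsum_mul_left, hinterchange]

theorem rlInt_mul_rpow_pow_div_Gamma {ν t : ℝ} (hν : 0 < ν) (ht : 0 < t) (b : ℝ) (k : ℕ) :
    rlInt ν (fun s => (b * s ^ ν) ^ k / Gamma (ν * k + 1)) t
      = b ^ k * (t ^ ν) ^ (k + 1) / Gamma (ν * (k + 1) + 1) := by
  have hΓ : Gamma (ν * k + 1) ≠ 0 := (Gamma_pos_of_pos (by positivity)).ne'
  have hpow : ∀ (s : ℝ) (m : ℕ), 0 ≤ s → (s ^ ν) ^ m = s ^ (ν * m) := fun s m hs => by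
    rw [rpow_mul hs, rpow_natCast]
  rw [rlInt_congr ht.le (g := fun s => b ^ k / Gamma (ν * k + 1) * s ^ (ν * k))
      fun s hs => by simp only [mul_pow, hpow s k hs.1]; ring,
    rlInt_const_mul, rlInt_rpow hν (by linarith [show 0 ≤ ν * k by positivity]) ht,
    show ν * k + ν = ν * (k + 1 : ℕ) by push_cast; ring, ← hpow t (k + 1) ht.le]
  push_cast
  field_simp

theorem hasSum_pow_mul_mittagLeffler_neg {ν : ℝ} (hν : 0 < ν) (n : ℕ) (x : ℝ) :
    HasSum (fun r : ℕ => (-1) ^ r * (x ^ (n + r) / Gamma (ν * ↑(n + r) + 1)))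
      (x ^ n * mittagLeffler ν (ν * n + 1) (-x)) := by
  rw [mittagLeffler]
  refine ((summable_pow_div_Gamma hν (ν * n + 1) (-x)).hasSum.mul_left (x ^ n)).congr_fun
    fun r => ?_
  rw [neg_pow, pow_add]
  push_cast
  ring_nf

noncomputable def mlSeriesTerm (ν a : ℝ) (n r : ℕ) (s : ℝ) : ℝ :=
  (-1) ^ r * ((a * s ^ ν) ^ (n + r) / Gamma (ν * ↑(n + r) + 1))

section mlSeriesTerm

variable {ν t : ℝ} (a : ℝ) (n : ℕ)

theorem continuous_mlSeriesTerm (hν : 0 ≤ ν) (r : ℕ) : Continuous (mlSeriesTerm ν a n r) :=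
  ((continuous_const.mul (continuous_rpow_const hν)).pow _).div_const _ |>.const_mul _

theorem summable_rlInt_abs_mlSeriesTerm (hν : 0 < ν) (ht : 0 < t) :
    Summable fun r => rlInt ν (fun s => |mlSeriesTerm ν a n r s|) t := by
  have habs : ∀ r, rlInt ν (fun s => |mlSeriesTerm ν a n r s|) t
      = |a| ^ (n + r) * (t ^ ν) ^ (n + r + 1) / Gamma (ν * ↑(n + r + 1) + 1) := fun r => by
    rw [rlInt_congr ht.le fun s hs => ?_, rlInt_mul_rpow_pow_div_Gamma hν ht |a| (n + r)]
    · push_cast; rfl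
    · have hΓ : 0 < Gamma (ν * ↑(n + r) + 1) := Gamma_pos_of_pos (by positivity)
      simp only [mlSeriesTerm, abs_mul, abs_div, abs_pow, abs_neg, abs_one, one_pow, one_mul,
        abs_of_nonneg (rpow_nonneg hs.1 ν), abs_of_pos hΓ]
  refine ((summable_pow_div_Gamma hν (ν * n + ν + 1) (|a| * t ^ ν)).mul_left
    (t ^ ν * (|a| * t ^ ν) ^ n)).congr fun r => ?_
  rw [habs, show ν * ↑(n + r + 1) + 1 = ν * r + (ν * n + ν + 1) by push_cast; ring]
  ring

theorem mul_rlInt_mlSeriesTerm (hν : 0 < ν) (ht : 0 < t) (r : ℕ) :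
    a * rlInt ν (mlSeriesTerm ν a n r) t = -mlSeriesTerm ν a n (r + 1) t := by
  unfold mlSeriesTerm
  rw [rlInt_const_mul, rlInt_mul_rpow_pow_div_Gamma hν ht,
    show ν * ((n + r : ℕ) + 1 : ℝ) + 1 = ν * ↑(n + (r + 1)) + 1 by push_cast; ring]
  ring

end mlSeriesTerm

theorem scaled_mittagLeffler_solves_general (ν d : ℝ) (hν : 0 < ν) (n : ℕ)
    (t : ℝ) (ht : 0 < t) :
    (d ^ ν * t ^ ν) ^ n * mittagLeffler ν (ν * n + 1) (-(d ^ ν * t ^ ν)) +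
      d ^ ν *
        rlInt ν (fun s => (d ^ ν * s ^ ν) ^ n * mittagLeffler ν (ν * n + 1) (-(d ^ ν * s ^ ν))) t
    = (d ^ ν * t ^ ν) ^ n / Real.Gamma (ν * n + 1) := by
  have hseries : ∀ s, HasSum (fun r => mlSeriesTerm ν (d ^ ν) n r s)
      ((d ^ ν * s ^ ν) ^ n * mittagLeffler ν (ν * n + 1) (-(d ^ ν * s ^ ν))) :=
    fun s => hasSum_pow_mul_mittagLeffler_neg hν n (d ^ ν * s ^ ν)
  rw [← (hseries t).tsum_eq, funext fun s => (hseries s).tsum_eq.symm,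
    (hseries t).summable.tsum_eq_zero_add,
    rlInt_tsum hν ht.le (fun r => (continuous_mlSeriesTerm _ n hν.le r).continuousOn)
      (summable_rlInt_abs_mlSeriesTerm _ n hν ht),
    ← tsum_mul_left, tsum_congr (mul_rlInt_mlSeriesTerm _ n hν ht), tsum_neg]
  simp [mlSeriesTerm]

theorem scaled_mittagLeffler_solves (ν d : ℝ) (hν : 0 < ν) (hd : 0 < d) (n : ℕ)
    (t : ℝ) (ht : 0 < t) :
    (d ^ ν * t ^ ν) ^ n * mittagLeffler ν (ν * n + 1) (-(d ^ ν * t ^ ν)) +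
      d ^ ν *
        rlInt ν (fun s => (d ^ ν * s ^ ν) ^ n * mittagLeffler ν (ν * n + 1) (-(d ^ ν * s ^ ν))) t
    = (d ^ ν * t ^ ν) ^ n / Real.Gamma (ν * n + 1) :=
  scaled_mittagLeffler_solves_general ν d hν n t ht
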